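/- arXiv:2003.05031 — 6 statements merged into one kernel-verified Lean document; each statement's English description precedes it below -/
import Mathlib

section
/- Let k be an algebraically closed field, let G be a group and H a normal subgroup of G. Let V and W be finite-dimensional k-vector spaces and let ρ : G → GL(V) and σ : G → GL(W) be representations such that the restrictions of ρ and σ to H are irreducible (V ≠ 0 and the only ρ(H)-invariant subspaces of V are 0 and V, and likewise for σ and W) and isomorphic as representations of H. Then there exist a group homomorphism χ : G → kˣ with H contained in the kernel of χ and a k-linear isomorphism T : V → W such that T ∘ ρ(g) = χ(g) • (σ(g) ∘ T) for every g ∈ G; that is, σ is isomorphic to the twist of ρ by a character of G/H. -/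
/-! For `g ∈ G` the map `σ g⁻¹ ∘ e ∘ ρ g` again intertwines the restrictions to `H`, because `H`
is normal, so by Schur's lemma it is a scalar multiple `χ g • e`. Comparing scalars on one nonzero
vector shows that `χ` is multiplicative and trivial on `H`. -/

section Schur

variable {k V W : Type*} [Field k] [IsAlgClosed k]
  [AddCommGroup V] [Module k V] [FiniteDimensional k V] [Nontrivial V]
  [AddCommGroup W] [Module k W] {ι : Type*}

theorem Module.End.exists_eq_smul_of_commute_of_irreducible (a : ι → Module.End k V)
    (hirr : ∀ p : Submodule k V, (∀ i, ∀ v ∈ p, a i v ∈ p) → p = ⊥ ∨ p = ⊤)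
    (f : Module.End k V) (hf : ∀ i v, f (a i v) = a i (f v)) :
    ∃ c : k, ∀ v, f v = c • v := by
  obtain ⟨c, hc⟩ := Module.End.exists_eigenvalue f
  have hinv : ∀ i, ∀ v ∈ f.eigenspace c, a i v ∈ f.eigenspace c := by
    intro i v hv
    rw [Module.End.mem_eigenspace_iff] at hv ⊢
    rw [hf, hv, map_smul]
  rcases hirr _ hinv with hbot | htop
  · exact absurd hbot hc
  · exact ⟨c, fun v => Module.End.mem_eigenspace_iff.mp (htop ▸ Submodule.mem_top)⟩

theorem exists_eq_smul_of_intertwining_of_irreducible (a : ι → Module.End k V)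
    (b : ι → Module.End k W)
    (hirr : ∀ p : Submodule k V, (∀ i, ∀ v ∈ p, a i v ∈ p) → p = ⊥ ∨ p = ⊤)
    (e : V ≃ₗ[k] W) (he : ∀ i v, e (a i v) = b i (e v))
    (f : V →ₗ[k] W) (hf : ∀ i v, f (a i v) = b i (f v)) :
    ∃ c : k, ∀ v, f v = c • e v := by
  have he_symm : ∀ i w, e.symm (b i w) = a i (e.symm w) := fun i w => by
    rw [e.symm_apply_eq, he, e.apply_symm_apply]
  obtain ⟨c, hc⟩ := Module.End.exists_eq_smul_of_commute_of_irreducible a hirr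
    (e.symm.toLinearMap ∘ₗ f) fun i v => by simp [hf, he_symm]
  exact ⟨c, fun v => by simpa [e.symm_apply_eq] using hc v⟩

end Schur

section Twist

variable {k G V W : Type*} [Field k] [Group G]
  [AddCommGroup V] [Module k V] [AddCommGroup W] [Module k W]
  (ρ : G →* (V ≃ₗ[k] V)) (σ : G →* (W ≃ₗ[k] W))

theorem intertwining_conj_of_normal (H : Subgroup G) [H.Normal] (e : V →ₗ[k] W)
    (he : ∀ h ∈ H, ∀ v, e (ρ h v) = σ h (e v)) (g : G) :
    ∀ h ∈ H, ∀ v, σ g⁻¹ (e (ρ g (ρ h v))) = σ h (σ g⁻¹ (e (ρ g v))) := by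
  intro h hh v
  have hconj : g * h * g⁻¹ ∈ H := Subgroup.Normal.conj_mem ‹_› h hh g
  have hρ : ρ g (ρ h v) = ρ (g * h * g⁻¹) (ρ g v) := by
    rw [← LinearEquiv.mul_apply, ← LinearEquiv.mul_apply, ← map_mul, ← map_mul,
      inv_mul_cancel_right]
  have hσ : ∀ w, σ g⁻¹ (σ (g * h * g⁻¹) w) = σ h (σ g⁻¹ w) := fun w => by
    rw [← LinearEquiv.mul_apply, ← LinearEquiv.mul_apply, ← map_mul, ← map_mul]
    congr 2
    group
  rw [hρ, he _ hconj, hσ]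

theorem exists_monoidHom_of_twisted_intertwining [Nontrivial V] (e : V ≃ₗ[k] W) (c : G → k)
    (hc : ∀ g v, e (ρ g v) = c g • σ g (e v)) : ∃ χ : G →* kˣ, ∀ g, (χ g : k) = c g := by
  obtain ⟨v, hv⟩ := exists_ne (0 : V)
  have hne : ∀ g, σ g (e v) ≠ 0 := fun g => by simpa using hv
  have hc_one : c 1 = 1 := smul_left_injective k (hne 1) (by simpa using (hc 1 v).symm)
  have hc_mul : ∀ g₁ g₂, c (g₁ * g₂) = c g₁ * c g₂ := fun g₁ g₂ => by
    refine smul_left_injective k (hne (g₁ * g₂)) ?_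
    calc c (g₁ * g₂) • σ (g₁ * g₂) (e v) = e (ρ g₁ (ρ g₂ v)) := by rw [← hc, map_mul]; rfl
      _ = (c g₁ * c g₂) • σ (g₁ * g₂) (e v) := by rw [hc, hc, map_smul, smul_smul, map_mul]; rfl
  exact ⟨MonoidHom.toHomUnits ⟨⟨c, hc_one⟩, hc_mul⟩, fun _ => rfl⟩

end Twist

theorem twist_of_restriction_iso_general
    {k : Type*} [Field k] [IsAlgClosed k]
    {G : Type*} [Group G] (H : Subgroup G) [H.Normal]
    {V W : Type*} [AddCommGroup V] [Module k V] [FiniteDimensional k V]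
    [AddCommGroup W] [Module k W]
    (ρ : G →* (V ≃ₗ[k] V)) (σ : G →* (W ≃ₗ[k] W))
    (hVne : ∃ v : V, v ≠ 0)
    (hVirr : ∀ p : Submodule k V, (∀ h ∈ H, ∀ v ∈ p, ρ h v ∈ p) → p = ⊥ ∨ p = ⊤)
    (e : V ≃ₗ[k] W) (he : ∀ h ∈ H, ∀ v : V, e (ρ h v) = σ h (e v)) :
    ∃ (χ : G →* kˣ) (T : V ≃ₗ[k] W),
      (∀ h ∈ H, χ h = 1) ∧
      ∀ g : G, ∀ v : V, T (ρ g v) = (χ g : k) • σ g (T v) := by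
  obtain ⟨v, hv⟩ := hVne
  have : Nontrivial V := nontrivial_of_ne v 0 hv
  have hscalar : ∀ g, ∃ c : k, ∀ v, e (ρ g v) = c • σ g (e v) := fun g => by
    obtain ⟨c, hc⟩ := exists_eq_smul_of_intertwining_of_irreducible
      (fun h : H => (ρ h).toLinearMap) (fun h : H => (σ h).toLinearMap)
      (fun p hp => hVirr p fun h hh => hp ⟨h, hh⟩) e (fun h => he h h.2)
      ((σ g⁻¹).toLinearMap ∘ₗ e.toLinearMap ∘ₗ (ρ g).toLinearMap)
      (fun h => intertwining_conj_of_normal ρ σ H e he g h h.2)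
    refine ⟨c, fun v => ?_⟩
    simpa [← LinearEquiv.mul_apply, ← map_mul] using congr_arg (σ g) (hc v)
  choose c hc using hscalar
  obtain ⟨χ, hχ⟩ := exists_monoidHom_of_twisted_intertwining ρ σ e c hc
  refine ⟨χ, e, fun h hh => Units.ext ?_, fun g => hχ g ▸ hc g⟩
  rw [hχ, Units.val_one]
  exact smul_left_injective k (by simpa using hv : σ h (e v) ≠ 0)
    (by simpa [he h hh] using (hc h v).symm)

/-- Lemma on extending an isomorphism of irreducible restricted representations to a
character twist (Lemma `L:ext` of the paper). -/
theorem twist_of_restriction_iso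
    {k : Type*} [Field k] [IsAlgClosed k]
    {G : Type*} [Group G] (H : Subgroup G) [H.Normal]
    {V W : Type*} [AddCommGroup V] [Module k V] [FiniteDimensional k V]
    [AddCommGroup W] [Module k W] [FiniteDimensional k W]
    (ρ : G →* (V ≃ₗ[k] V)) (σ : G →* (W ≃ₗ[k] W))
    (hVne : ∃ v : V, v ≠ 0)
    (hVirr : ∀ p : Submodule k V, (∀ h ∈ H, ∀ v ∈ p, ρ h v ∈ p) → p = ⊥ ∨ p = ⊤)
    (hWne : ∃ w : W, w ≠ 0)
    (hWirr : ∀ q : Submodule k W, (∀ h ∈ H, ∀ w ∈ q, σ h w ∈ q) → q = ⊥ ∨ q = ⊤)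
    (e : V ≃ₗ[k] W) (he : ∀ h ∈ H, ∀ v : V, e (ρ h v) = σ h (e v)) :
    ∃ (χ : G →* kˣ) (T : V ≃ₗ[k] W),
      (∀ h ∈ H, χ h = 1) ∧
      ∀ g : G, ∀ v : V, T (ρ g v) = (χ g : k) • σ g (T v) :=
  twist_of_restriction_iso_general H ρ σ hVne hVirr e he
end

section
/- Let 𝔽_q be a finite field, ψ : 𝔽_q → ℂˣ a nontrivial additive character, and α, β multiplicative characters of 𝔽_q with α ≠ β. Then for every t ∈ 𝔽_q, Σ_{y ∈ 𝔽_qˣ} ψ((t−1)·y) · α(t·y) · β⁻¹(y) = g(ψ, α·β⁻¹) · α(t) · (β·α⁻¹)(t−1). -/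
/-!
With `χ = α * β⁻¹` the sum is `α t` times the Gauss sum of `χ` against `y ↦ ψ ((t - 1) * y)`.
Rescaling `y` turns this into `χ⁻¹ (t - 1) * g(ψ, χ)` when `t ≠ 1`; when `t = 1` both sides
vanish because the nontrivial character `χ` sums to zero.
-/

open AddChar

theorem Fintype.sum_units_eq_sum_of_map_nonunit {M R : Type*} [Monoid M] [Fintype M]
    [Fintype Mˣ] [AddCommMonoid R] {f : M → R} (hf : ∀ x, ¬IsUnit x → f x = 0) :
    ∑ u : Mˣ, f u = ∑ x, f x :=
  Finset.sum_of_injOn Units.val Units.val_injective.injOn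
    (fun _ _ => Finset.mem_coe.mpr (Finset.mem_univ _))
    (fun x _ hx => hf x fun hu => hx ⟨hu.unit, by simp, rfl⟩) (fun _ _ => rfl)

theorem gaussSum_eq_sum_units {R R' : Type*} [CommRing R] [Fintype R] [DecidableEq R]
    [CommRing R'] (χ : MulChar R R') (ψ : AddChar R R') :
    gaussSum χ ψ = ∑ u : Rˣ, χ u * ψ u :=
  (Fintype.sum_units_eq_sum_of_map_nonunit (f := fun x => χ x * ψ x) fun x hx => by
    rw [χ.map_nonunit hx, zero_mul]).symm

theorem gaussSum_mulShift_eq_of_ne_one {F R : Type*} [Field F] [Fintype F] [CommRing R]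
    [IsDomain R] {χ : MulChar F R} (hχ : χ ≠ 1) (ψ : AddChar F R) (a : F) :
    gaussSum χ (ψ.mulShift a) = χ⁻¹ a * gaussSum χ ψ := by
  rcases eq_or_ne a 0 with rfl | ha
  · rw [mulShift_zero, gaussSum_one_right hχ, MulChar.map_zero, zero_mul]
  · exact gaussSum_mulShift_eq χ ψ (Units.mk0 a ha)

theorem rank_one_hypergeometric_sum_general
    {F : Type*} [Field F] [Fintype F] [DecidableEq F]
    (ψ : AddChar F ℂ)
    (α β : MulChar F ℂ) (hαβ : α ≠ β) (t : F) :
    ∑ y : Fˣ, ψ ((t - 1) * (y : F)) * α (t * (y : F)) * β⁻¹ (y : F)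
      = gaussSum (α * β⁻¹) ψ * α t * (β * α⁻¹) (t - 1) := by
  set χ := α * β⁻¹
  have hχ : χ ≠ 1 := fun h => hαβ (mul_inv_eq_one.mp h)
  have hχ_inv : β * α⁻¹ = χ⁻¹ := by rw [mul_inv, inv_inv, mul_comm]
  calc ∑ y : Fˣ, ψ ((t - 1) * (y : F)) * α (t * (y : F)) * β⁻¹ (y : F)
      = α t * gaussSum χ (ψ.mulShift (t - 1)) := by
        rw [gaussSum_eq_sum_units, Finset.mul_sum]
        refine Finset.sum_congr rfl fun y _ => ?_
        rw [map_mul α, MulChar.mul_apply, mulShift_apply]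
        ring
    _ = gaussSum χ ψ * α t * (β * α⁻¹) (t - 1) := by
        rw [gaussSum_mulShift_eq_of_ne_one hχ, hχ_inv]
        ring

/-- The rank-one finite-field hypergeometric evaluation (Section 7.4 of the paper). -/
theorem rank_one_hypergeometric_sum
    {F : Type*} [Field F] [Fintype F] [DecidableEq F]
    (ψ : AddChar F ℂ) (hψ : ψ ≠ 1)
    (α β : MulChar F ℂ) (hαβ : α ≠ β) (t : F) :
    ∑ y : Fˣ, ψ ((t - 1) * (y : F)) * α (t * (y : F)) * β⁻¹ (y : F)
      = gaussSum (α * β⁻¹) ψ * α t * (β * α⁻¹) (t - 1) :=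
  rank_one_hypergeometric_sum_general ψ α β hαβ t
end

section
/- Let 𝔽_q be a finite field, ψ : 𝔽_q → ℂˣ a nontrivial additive character, and α₁, α₂, β₁, β₂ multiplicative characters of 𝔽_q with α₁ ≠ β₁ and α₂ ≠ β₂. Then for every t ∈ 𝔽_q with t ≠ 0, the sum Σ ψ(x₁+x₂−y₁−y₂) · α₁(x₁) · α₂(x₂) · β₁⁻¹(y₁) · β₂⁻¹(y₂), taken over all quadruples (x₁,x₂,y₁,y₂) ∈ 𝔽_q⁴ with y₁ ≠ 0, y₂ ≠ 0 and x₁·x₂ = t·y₁·y₂, equals g(ψ, α₁β₁⁻¹) · g(ψ, α₂β₂⁻¹) · α₂(t) · Σ_{s ∈ 𝔽_q} (α₁β₂⁻¹)(s) · (β₁α₁⁻¹)(s−1) · (β₂α₂⁻¹)(t−s). -/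
/-! Substituting `x₁ = s y₁`, `x₂ = t s⁻¹ y₂` (legitimate since `t ≠ 0` forces `x₁ ≠ 0`) separates
`y₁` and `y₂`. Each one-variable sum `∑ y, (αβ⁻¹)(y) ψ((a - 1) y)` is a rescaled Gauss sum, equal to
`(βα⁻¹)(a - 1) g(ψ, αβ⁻¹)`, and the remaining sum over `s` becomes the stated convolution via
`χ(t s⁻¹ - 1) = χ(t - s) χ⁻¹(s)`. -/

open Finset

section MulChar

variable {F R : Type*} [Field F] [CommRing R]

theorem mulChar_mul_apply_mul_inv_sub_one (α₁ α₂ β₂ : MulChar F R) (s t : F) :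
    α₁ s * α₂ (t * s⁻¹) * (β₂ * α₂⁻¹) (t * s⁻¹ - 1)
      = α₂ t * ((α₁ * β₂⁻¹) s * (β₂ * α₂⁻¹) (t - s)) := by
  rcases eq_or_ne s 0 with rfl | hs
  · simp [MulChar.map_zero]
  have hα₂ : α₂ s⁻¹ * α₂ s = 1 := by rw [← map_mul, inv_mul_cancel₀ hs, MulChar.map_one]
  have hχ : (β₂ * α₂⁻¹) s⁻¹ = α₂ s * β₂ s⁻¹ := by
    rw [MulChar.mul_apply, MulChar.inv_apply' α₂, inv_inv, mul_comm]
  rw [show t * s⁻¹ - 1 = (t - s) * s⁻¹ by field_simp, map_mul, map_mul, hχ, MulChar.mul_apply α₁,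
    MulChar.inv_apply' β₂]
  linear_combination α₂ t * α₁ s * β₂ s⁻¹ * (β₂ * α₂⁻¹) (t - s) * hα₂

variable [Fintype F] [IsDomain R]

theorem sum_mulChar_mul_addChar_mul {χ : MulChar F R} (hχ : χ ≠ 1) (ψ : AddChar F R) (c : F) :
    ∑ y, χ y * ψ (c * y) = χ⁻¹ c * gaussSum χ ψ := by
  rcases eq_or_ne c 0 with rfl | hc
  · simp [MulChar.sum_eq_zero_of_ne_one hχ, MulChar.map_zero]
  · exact gaussSum_mulShift_eq χ ψ (Units.mk0 c hc)

theorem sum_addChar_mul_mulChar_mul_inv {α β : MulChar F R} (h : α ≠ β) (ψ : AddChar F R)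
    (a : F) :
    ∑ y, ψ (a * y - y) * α (a * y) * β⁻¹ y = α a * (β * α⁻¹) (a - 1) * gaussSum (α * β⁻¹) ψ := by
  have hχ : α * β⁻¹ ≠ 1 := fun h' => h (mul_inv_eq_one.mp h')
  have hinv : (α * β⁻¹)⁻¹ = β * α⁻¹ := by rw [mul_inv_rev, inv_inv]
  calc ∑ y, ψ (a * y - y) * α (a * y) * β⁻¹ y
      = α a * ∑ y, (α * β⁻¹) y * ψ ((a - 1) * y) := by
        rw [mul_sum]
        refine sum_congr rfl fun y _ => ?_
        rw [map_mul, MulChar.mul_apply, sub_one_mul]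
        ring
    _ = α a * (β * α⁻¹) (a - 1) * gaussSum (α * β⁻¹) ψ := by
        rw [sum_mulChar_mul_addChar_mul hχ, hinv, mul_assoc]

end MulChar

theorem sum_filter_mul_eq_mul_mul_reparam {F M : Type*} [Field F] [Fintype F] [DecidableEq F]
    [AddCommMonoid M] {t : F} (ht : t ≠ 0) (f : F × F × F × F → M) :
    ∑ v ∈ univ.filter (fun v : F × F × F × F =>
        v.2.2.1 ≠ 0 ∧ v.2.2.2 ≠ 0 ∧ v.1 * v.2.1 = t * v.2.2.1 * v.2.2.2), f v
      = ∑ w ∈ univ.filter (fun w : F × F × F => w.1 ≠ 0 ∧ w.2.1 ≠ 0 ∧ w.2.2 ≠ 0),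
          f (w.1 * w.2.1, t * w.1⁻¹ * w.2.2, w.2.1, w.2.2) := by
  symm
  refine sum_nbij' (fun w => (w.1 * w.2.1, t * w.1⁻¹ * w.2.2, w.2.1, w.2.2))
    (fun v => (v.1 * v.2.2.1⁻¹, v.2.2.1, v.2.2.2)) ?_ ?_ ?_ ?_ fun _ _ => rfl
  · rintro ⟨s, y₁, y₂⟩ hw
    simp only [mem_filter, mem_univ, true_and] at hw ⊢
    obtain ⟨hs, hy₁, hy₂⟩ := hw
    exact ⟨hy₁, hy₂, by field_simp⟩
  · rintro ⟨x₁, x₂, y₁, y₂⟩ hv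
    simp only [mem_filter, mem_univ, true_and] at hv ⊢
    obtain ⟨hy₁, hy₂, hx⟩ := hv
    have hx₁ : x₁ ≠ 0 := left_ne_zero_of_mul (hx ▸ mul_ne_zero (mul_ne_zero ht hy₁) hy₂)
    exact ⟨mul_ne_zero hx₁ (inv_ne_zero hy₁), hy₁, hy₂⟩
  · rintro ⟨s, y₁, y₂⟩ hw
    simp only [mem_filter, mem_univ, true_and] at hw
    obtain ⟨-, hy₁, -⟩ := hw
    simp [hy₁]
  · rintro ⟨x₁, x₂, y₁, y₂⟩ hv
    simp only [mem_filter, mem_univ, true_and] at hv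
    obtain ⟨hy₁, hy₂, hx⟩ := hv
    have hx₁ : x₁ ≠ 0 := left_ne_zero_of_mul (hx ▸ mul_ne_zero (mul_ne_zero ht hy₁) hy₂)
    simp only [Prod.mk.injEq, inv_mul_cancel_right₀ hy₁, true_and, and_true]
    field_simp
    linear_combination hx.symm

theorem hypergeometric_sum_convolution_general
    {F : Type*} [Field F] [Fintype F] [DecidableEq F]
    (ψ : AddChar F ℂ)
    (α₁ α₂ β₁ β₂ : MulChar F ℂ) (h₁ : α₁ ≠ β₁) (h₂ : α₂ ≠ β₂)
    (t : F) (ht : t ≠ 0) :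
    ∑ v ∈ Finset.univ.filter
        (fun v : F × F × F × F =>
          v.2.2.1 ≠ 0 ∧ v.2.2.2 ≠ 0 ∧ v.1 * v.2.1 = t * v.2.2.1 * v.2.2.2),
      ψ (v.1 + v.2.1 - v.2.2.1 - v.2.2.2) * α₁ v.1 * α₂ v.2.1 * β₁⁻¹ v.2.2.1 * β₂⁻¹ v.2.2.2
      = gaussSum (α₁ * β₁⁻¹) ψ * gaussSum (α₂ * β₂⁻¹) ψ * α₂ t *
          ∑ s : F, (α₁ * β₂⁻¹) s * (β₁ * α₁⁻¹) (s - 1) * (β₂ * α₂⁻¹) (t - s) := by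
  rw [sum_filter_mul_eq_mul_mul_reparam ht, sum_filter_of_ne, Fintype.sum_prod_type, mul_sum]
  · refine sum_congr rfl fun s _ => ?_
    have hsplit : ∀ y₁ y₂ : F,
        ψ (s * y₁ + t * s⁻¹ * y₂ - y₁ - y₂) * α₁ (s * y₁) * α₂ (t * s⁻¹ * y₂) * β₁⁻¹ y₁ * β₂⁻¹ y₂
          = (ψ (s * y₁ - y₁) * α₁ (s * y₁) * β₁⁻¹ y₁) *
              (ψ (t * s⁻¹ * y₂ - y₂) * α₂ (t * s⁻¹ * y₂) * β₂⁻¹ y₂) := by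
      intro y₁ y₂
      rw [show s * y₁ + t * s⁻¹ * y₂ - y₁ - y₂ = (s * y₁ - y₁) + (t * s⁻¹ * y₂ - y₂) by ring,
        AddChar.map_add_eq_mul]
      ring
    rw [Fintype.sum_prod_type]
    simp only [hsplit]
    rw [← Fintype.sum_mul_sum, sum_addChar_mul_mulChar_mul_inv h₁,
      sum_addChar_mul_mulChar_mul_inv h₂]
    linear_combination gaussSum (α₁ * β₁⁻¹) ψ * gaussSum (α₂ * β₂⁻¹) ψ * (β₁ * α₁⁻¹) (s - 1) *
      mulChar_mul_apply_mul_inv_sub_one α₁ α₂ β₂ s t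
  · rintro ⟨s, y₁, y₂⟩ - hne
    refine ⟨?_, ?_, ?_⟩ <;> rintro rfl <;> simp [MulChar.map_zero] at hne

/-- The multiplicative-convolution reduction of the finite-field ₂F₁ character sum
(Lemma 7.2 / Section 7.4 of the paper). -/
theorem hypergeometric_sum_convolution
    {F : Type*} [Field F] [Fintype F] [DecidableEq F]
    (ψ : AddChar F ℂ) (hψ : ψ ≠ 1)
    (α₁ α₂ β₁ β₂ : MulChar F ℂ) (h₁ : α₁ ≠ β₁) (h₂ : α₂ ≠ β₂)
    (t : F) (ht : t ≠ 0) :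
    ∑ v ∈ Finset.univ.filter
        (fun v : F × F × F × F =>
          v.2.2.1 ≠ 0 ∧ v.2.2.2 ≠ 0 ∧ v.1 * v.2.1 = t * v.2.2.1 * v.2.2.2),
      ψ (v.1 + v.2.1 - v.2.2.1 - v.2.2.2) * α₁ v.1 * α₂ v.2.1 * β₁⁻¹ v.2.2.1 * β₂⁻¹ v.2.2.2
      = gaussSum (α₁ * β₁⁻¹) ψ * gaussSum (α₂ * β₂⁻¹) ψ * α₂ t *
          ∑ s : F, (α₁ * β₂⁻¹) s * (β₁ * α₁⁻¹) (s - 1) * (β₂ * α₂⁻¹) (t - s) :=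
  hypergeometric_sum_convolution_general ψ α₁ α₂ β₁ β₂ h₁ h₂ t ht
end

section
/- Let 𝔽_q be a finite field of odd cardinality q, let ε denote the quadratic character of 𝔽_q (the unique multiplicative character of order 2), let ψ : 𝔽_q → ℂˣ be a nontrivial additive character, and let χ be any multiplicative character of 𝔽_q. Then g(ψ, χ²) · g(ψ, ε) = χ(4) · g(ψ, χ) · g(ψ, ε·χ). -/
/-!
When `χ² ≠ 1` (so also `εχ ≠ 1`), the Jacobi-sum relations `g(χ)² = g(χ²) J(χ,χ)` and
`g(ε) g(χ) = g(εχ) J(ε,χ)` reduce the formula to `χ(4) J(χ,χ) = J(ε,χ)`. That identity comes from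
substituting `x = (1 + y) / 2` in `Σ χ(4x(1 - x))`, which gives `Σ χ(1 - y²)`, and from counting
the square roots of `u` by `1 + ε(u)`. Since the character group is cyclic, the only characters
with `χ² = 1` are `1` and `ε`, and for these the formula is immediate.
-/

open Finset

namespace MulChar

variable {M R : Type*} [CommMonoid M] [Fintype M] [DecidableEq M] [IsCyclic Mˣ]
  [CommRing R] [IsDomain R]

lemma coe_equiv_rootsOfUnity_eq_neg_one {χ : MulChar M R} (hχ : χ ≠ 1) (hχ2 : χ ^ 2 = 1) :
    ((equiv_rootsOfUnity M R χ : Rˣ) : R) = -1 := by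
  have hsq : ((equiv_rootsOfUnity M R χ : Rˣ) : R) ^ 2 = 1 := by
    rw [← Units.val_pow_eq_pow_val, ← Subgroup.coe_pow, ← map_pow, hχ2, map_one]
    rfl
  refine (sq_eq_one_iff.mp hsq).resolve_left fun h ↦ hχ ?_
  refine (equiv_rootsOfUnity M R).injective ?_
  rw [map_one]
  exact Subtype.ext (Units.ext h)

lemma eq_of_ne_one_of_sq_eq_one {χ φ : MulChar M R} (hχ : χ ≠ 1) (hφ : φ ≠ 1)
    (hχ2 : χ ^ 2 = 1) (hφ2 : φ ^ 2 = 1) : χ = φ :=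
  (equiv_rootsOfUnity M R).injective <| Subtype.ext <| Units.ext <|
    (coe_equiv_rootsOfUnity_eq_neg_one hχ hχ2).trans (coe_equiv_rootsOfUnity_eq_neg_one hφ hφ2).symm

end MulChar

section QuadraticChar

variable {F : Type*} [Field F] [Fintype F] [DecidableEq F]

lemma sum_apply_sq_eq_sum_one_add_quadraticChar_mul {R : Type*} [Ring R] (hF : ringChar F ≠ 2)
    (f : F → R) :
    ∑ y : F, f (y ^ 2) = ∑ u : F, (1 + (quadraticChar F u : R)) * f u := by
  rw [← sum_fiberwise univ (· ^ 2) fun y ↦ f (y ^ 2)]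
  refine sum_congr rfl fun u _ ↦ ?_
  have hcard : (#{y : F | y ^ 2 = u} : R) = 1 + quadraticChar F u := by
    have h := quadraticChar_card_sqrts hF u
    rw [Set.toFinset_ofPred] at h
    rw [add_comm, ← Int.cast_one, ← Int.cast_add, ← h, Int.cast_natCast]
  rw [sum_congr rfl fun y hy ↦ by rw [(mem_filter.mp hy).2], sum_const, nsmul_eq_mul, hcard]

lemma apply_four_mul_jacobiSum_self_eq_jacobiSum_quadraticChar {R : Type*} [CommRing R]
    [IsDomain R] (hF : ringChar F ≠ 2) {χ : MulChar F R} (hχ : χ ≠ 1) :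
    χ 4 * jacobiSum χ χ = jacobiSum ((quadraticChar F).ringHomComp (Int.castRingHom R)) χ := by
  have h2 : (2 : F) ≠ 0 := Ring.two_ne_zero hF
  have hsubst : ∑ x : F, χ (4 * (x * (1 - x))) = ∑ y : F, χ (1 - y ^ 2) := by
    rw [← Equiv.sum_comp ((Equiv.addRight (1 : F)).trans (Equiv.mulRight₀ _ (inv_ne_zero h2)))]
    refine sum_congr rfl fun y _ ↦ congrArg χ ?_
    change 4 * ((y + 1) * 2⁻¹ * (1 - (y + 1) * 2⁻¹)) = 1 - y ^ 2
    field_simp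
    ring
  have hvanish : ∑ u : F, χ (1 - u) = 0 := by
    rw [← MulChar.sum_eq_zero_of_ne_one hχ]
    exact Equiv.sum_comp (Equiv.subLeft 1) χ
  calc χ 4 * jacobiSum χ χ = ∑ x : F, χ (4 * (x * (1 - x))) := by
        simp only [jacobiSum, mul_sum, map_mul]
    _ = ∑ u : F, (1 + (quadraticChar F u : R)) * χ (1 - u) := by
        rw [hsubst, sum_apply_sq_eq_sum_one_add_quadraticChar_mul hF fun u ↦ χ (1 - u)]
    _ = ∑ u : F, χ (1 - u) + ∑ u : F, (quadraticChar F u : R) * χ (1 - u) := by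
        simp only [add_mul, one_mul, sum_add_distrib]
    _ = _ := by
        rw [hvanish, zero_add]
        rfl

end QuadraticChar

/-- The Gauss-sum duplication formula g(ψ,χ²)g(ψ,ε) = χ(4)g(ψ,χ)g(ψ,εχ)
(Section 10.2 of the paper). -/
theorem gaussSum_duplication
    {F : Type*} [Field F] [Fintype F] [DecidableEq F]
    (hodd : Odd (Fintype.card F))
    (ε : MulChar F ℂ) (hε1 : ε ≠ 1) (hε2 : ε ^ 2 = 1)
    (ψ : AddChar F ℂ) (hψ : ψ ≠ 1) (χ : MulChar F ℂ) :
    gaussSum (χ ^ 2) ψ * gaussSum ε ψ = χ 4 * gaussSum χ ψ * gaussSum (ε * χ) ψ := by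
  have hF : ringChar F ≠ 2 := fun h ↦ by
    have := FiniteField.even_card_iff_char_two.mp h
    have := Nat.odd_iff.mp hodd
    omega
  have h2 : IsUnit (2 : F) := (Ring.two_ne_zero hF).isUnit
  have h4 : (4 : F) = 2 ^ 2 := by norm_num
  have hε4 : ε 4 = 1 := by
    rw [h4, map_pow, ← MulChar.pow_apply' ε two_ne_zero, hε2, MulChar.one_apply h2]
  by_cases hχ1 : χ = 1
  · subst hχ1
    rw [one_pow, mul_one, h4, MulChar.one_apply (h2.pow 2)]
    ring
  by_cases hχε : χ = ε
  · subst hχε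
    rw [hε2, ← sq, hε2, hε4]
    ring
  have hχ2 : χ ^ 2 ≠ 1 := fun h ↦ hχε (MulChar.eq_of_ne_one_of_sq_eq_one hχ1 hε1 h hε2)
  have hεχ : ε * χ ≠ 1 := fun h ↦ hχε (mul_left_cancel (by rw [h, ← sq, hε2]))
  have hεquad : ε = (quadraticChar F).ringHomComp (Int.castRingHom ℂ) :=
    MulChar.eq_of_ne_one_of_sq_eq_one hε1
      ((MulChar.ringHomComp_ne_one_iff Int.cast_injective).mpr (quadraticChar_ne_one hF)) hε2
      ((quadraticChar_isQuadratic F).comp _).sq_eq_one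
  have hJχχ : gaussSum (χ ^ 2) ψ * jacobiSum χ χ = gaussSum χ ψ * gaussSum χ ψ := by
    rw [sq]; exact jacobiSum_mul_nontrivial (by rwa [← sq]) ψ
  have hJεχ : gaussSum (ε * χ) ψ * jacobiSum ε χ = gaussSum ε ψ * gaussSum χ ψ :=
    jacobiSum_mul_nontrivial hεχ ψ
  have hJ : χ 4 * jacobiSum χ χ = jacobiSum ε χ := by
    rw [hεquad]; exact apply_four_mul_jacobiSum_self_eq_jacobiSum_quadraticChar hF hχ1
  have hgχ : gaussSum χ ψ ≠ 0 :=
    gaussSum_ne_zero_of_nontrivial (by exact_mod_cast Fintype.card_ne_zero) hχ1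
      (AddChar.IsPrimitive.of_ne_one hψ)
  refine mul_right_cancel₀ hgχ ?_
  linear_combination (-gaussSum (χ ^ 2) ψ) * hJεχ - gaussSum (χ ^ 2) ψ * gaussSum (ε * χ) ψ * hJ
    + χ 4 * gaussSum (ε * χ) ψ * hJχχ
end

section
/- For every real a > 0 and every real x with 0 < x < 1/9, ₂F₁(a, a + 1/3; 2a + 5/6; 27·x·(1−x)²/(1+3x)³) = (1+3x)^{3a} · ₂F₁(3a, 3a + 1/2; 2a + 5/6; x). -/
/-!
Put `c = 2a + 5/6`, `φ(x) = 27x(1-x)²/(1+3x)³` and `w(x) = (1+3x)^(-3a) ₂F₁(a, a+1/3; c; φ(x))`.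
By the chain rule, the hypergeometric operator with parameters `(3a, 3a+1/2; c)` applied to `w`
equals `27(1-x)/(1+3x)² · (1+3x)^(-3a)` times the operator with parameters `(a, a+1/3; c)`
applied to `₂F₁(a, a+1/3; c)` at `φ(x)`, which vanishes. Inserting a power series `Σ dₙ tⁿ` into
the hypergeometric equation with parameters `(α, β; γ)` yields the recurrence
`(n+1)(n+γ) dₙ₊₁ = (n+α)(n+β) dₙ`, so an analytic solution with value `1` at `0` agrees with
`₂F₁(α, β; γ)` near `0`. Hence `w = ₂F₁(3a, 3a+1/2; c)` near `0`, and then, by the identity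
theorem, on `(-1/100, 1/9)`, an interval on which `|φ| < 1`.
-/

open FormalMultilinearSeries
open scoped Topology ENNReal

/-- The Gauss hypergeometric series ₂F₁(a,b;c;t) = Σ (a)ₙ(b)ₙ/((c)ₙ n!) tⁿ. -/
noncomputable def realHyp2F1 (a b c t : ℝ) : ℝ :=
  ∑' n : ℕ, (ascPochhammer ℝ n).eval a * (ascPochhammer ℝ n).eval b /
      ((ascPochhammer ℝ n).eval c * (n.factorial : ℝ)) * t ^ n

namespace FormalMultilinearSeries

variable {𝕜 : Type*} [NontriviallyNormedField 𝕜]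

noncomputable def derivScalarSeries (p : FormalMultilinearSeries 𝕜 𝕜 𝕜) :
    FormalMultilinearSeries 𝕜 𝕜 𝕜 :=
  (ContinuousLinearMap.apply 𝕜 𝕜 1).compFormalMultilinearSeries p.derivSeries

@[simp]
theorem coeff_derivScalarSeries (p : FormalMultilinearSeries 𝕜 𝕜 𝕜) (n : ℕ) :
    p.derivScalarSeries.coeff n = (n + 1) * p.coeff (n + 1) := by
  change p.derivSeries.coeff n 1 = _
  rw [derivSeries_coeff_one, nsmul_eq_mul, Nat.cast_succ]

end FormalMultilinearSeries

section PowerSeries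

variable {𝕜 : Type*} [NontriviallyNormedField 𝕜]
  {f : 𝕜 → 𝕜} {p : FormalMultilinearSeries 𝕜 𝕜 𝕜} {x : 𝕜} {r : ℝ≥0∞}

theorem HasFPowerSeriesOnBall.hasFPowerSeriesOnBall_deriv [CompleteSpace 𝕜]
    (hf : HasFPowerSeriesOnBall f p x r) :
    HasFPowerSeriesOnBall (deriv f) p.derivScalarSeries x r :=
  (ContinuousLinearMap.apply 𝕜 𝕜 1).comp_hasFPowerSeriesOnBall hf.fderiv (f := fderiv 𝕜 f)

theorem HasFPowerSeriesOnBall.hasSum_coeff_mul_pow (hf : HasFPowerSeriesOnBall f p x r)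
    {y : 𝕜} (hy : y ∈ Metric.eball 0 r) : HasSum (fun n => p.coeff n * y ^ n) (f (x + y)) := by
  simpa [mul_comm] using hf.hasSum hy

theorem eq_zero_of_forall_hasSum_mul_pow_zero {d : ℕ → 𝕜} (hr : 0 < r)
    (h : ∀ y ∈ Metric.eball (0 : 𝕜) r, HasSum (fun n => d n * y ^ n) 0) : d = 0 := by
  set q := ofScalars 𝕜 d
  have hq : ∀ y ∈ Metric.eball (0 : 𝕜) r, HasSum (fun n => q n fun _ => y) 0 := fun y hy => by
    simpa [q, ofScalars_apply_eq, mul_comm] using h y hy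
  -- `q.radius` might be smaller than `r`; summability at one point `y ≠ 0` makes it positive
  obtain ⟨y, hy0, hyr⟩ : ∃ y : 𝕜, 0 < ‖y‖ₑ ∧ ‖y‖ₑ < r := by
    obtain ⟨ρ, hρ0, hρr⟩ := ENNReal.lt_iff_exists_nnreal_btwn.mp hr
    obtain ⟨y, hy0, hyρ⟩ := NormedField.exists_norm_lt 𝕜 (NNReal.coe_pos.mpr (mod_cast hρ0))
    refine ⟨y, by simpa using hy0, lt_trans ?_ hρr⟩
    rw [enorm_eq_nnnorm, ENNReal.coe_lt_coe, ← NNReal.coe_lt_coe, coe_nnnorm]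
    exact hyρ
  have hqy : ‖y‖ₑ ≤ q.radius := by
    refine q.le_radius_of_tendsto (l := 0) ?_
    have := (h y (by simpa using hyr)).summable.tendsto_atTop_zero.norm
    simpa [q, ofScalars_norm] using this
  have : HasFPowerSeriesOnBall 0 q 0 (min r q.radius) :=
    { r_le := min_le_right _ _
      r_pos := lt_min hr (hy0.trans_le hqy)
      hasSum := fun hy => by simpa using hq _ (Metric.eball_subset_eball (min_le_left _ _) hy) }
  exact (ofScalars_series_eq_zero (E := 𝕜)).mp this.hasFPowerSeriesAt.eq_zero

end PowerSeries

section HypergeometricRecurrence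

variable {R : Type*} [CommRing R] [TopologicalSpace R] [IsTopologicalRing R]

theorem HasSum.mul_pow_of_succ {g : ℕ → R} {t S : R} (h : HasSum (fun n => g (n + 1) * t ^ n) S)
    (hg : g 0 = 0) : HasSum (fun n => g n * t ^ n) (t * S) := by
  refine (hasSum_nat_add_iff' 1).mp ?_
  rw [Finset.sum_range_one, hg, zero_mul, sub_zero]
  exact (h.mul_left t).congr_fun fun n => by ring

theorem hasSum_hypergeometric_recurrence (a b c : R) {d : ℕ → R} {t f₀ f₁ f₂ : R}
    (h₀ : HasSum (fun n => d n * t ^ n) f₀)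
    (h₁ : HasSum (fun n => (n + 1) * d (n + 1) * t ^ n) f₁)
    (h₂ : HasSum (fun n => (n + 1) * ((n + 1 + 1) * d (n + 1 + 1)) * t ^ n) f₂) :
    HasSum (fun n => ((n + 1) * (n + c) * d (n + 1) - (n + a) * (n + b) * d n) * t ^ n)
      (t * (1 - t) * f₂ + (c - (a + b + 1) * t) * f₁ - a * b * f₀) := by
  have e₁ : HasSum (fun n : ℕ => (n : R) * d n * t ^ n) (t * f₁) :=
    HasSum.mul_pow_of_succ (g := fun m : ℕ => (m : R) * d m) (by simpa using h₁) (by simp)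
  have e₂ : HasSum (fun n : ℕ => (n : R) * ((n + 1) * d (n + 1)) * t ^ n) (t * f₂) :=
    HasSum.mul_pow_of_succ (g := fun m : ℕ => (m : R) * ((m + 1) * d (m + 1)))
      (by simpa using h₂) (by simp)
  have e₃ : HasSum (fun n : ℕ => (n : R) * (n - 1) * d n * t ^ n) (t * (t * f₂)) :=
    HasSum.mul_pow_of_succ (g := fun m : ℕ => (m : R) * (m - 1) * d m)
      (e₂.congr_fun fun n => by push_cast; ring) (by simp)
  rw [show t * (1 - t) * f₂ + (c - (a + b + 1) * t) * f₁ - a * b * f₀ =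
    t * f₂ + c * f₁ - t * (t * f₂) - (a + b + 1) * (t * f₁) - a * b * f₀ by ring]
  exact ((((e₂.add (h₁.mul_left c)).sub e₃).sub (e₁.mul_left (a + b + 1))).sub
    (h₀.mul_left (a * b))).congr_fun fun n => by ring

end HypergeometricRecurrence

section Hypergeometric

variable {𝕜 : Type*} [NontriviallyNormedField 𝕜]

noncomputable def hypergeometricOp (a b c : 𝕜) (f : 𝕜 → 𝕜) (t : 𝕜) : 𝕜 :=
  t * (1 - t) * deriv (deriv f) t + (c - (a + b + 1) * t) * deriv f t - a * b * f t

theorem ordinaryHypergeometricCoefficient_succ [CharZero 𝕜] (a b c : 𝕜) {n : ℕ}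
    (hc : (n : 𝕜) + c ≠ 0) :
    (n + 1) * (n + c) * ordinaryHypergeometricCoefficient a b c (n + 1) =
      (n + a) * (n + b) * ordinaryHypergeometricCoefficient a b c n := by
  simp only [ordinaryHypergeometricCoefficient, ascPochhammer_succ_eval, Nat.factorial_succ,
    Nat.cast_mul, mul_inv]
  have hn : (n + 1 : 𝕜) ≠ 0 := n.cast_add_one_ne_zero
  have hc' : c + n ≠ 0 := by rwa [add_comm]
  have hn' : (n.factorial : 𝕜) ≠ 0 := by exact_mod_cast n.factorial_ne_zero
  rcases eq_or_ne ((ascPochhammer 𝕜 n).eval c) 0 with hp | hp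
  · simp [hp]
  · field_simp
    push_cast
    ring

variable [CompleteSpace 𝕜]

theorem HasFPowerSeriesOnBall.hasSum_hypergeometricOp (a b c : 𝕜)
    {f : 𝕜 → 𝕜} {p : FormalMultilinearSeries 𝕜 𝕜 𝕜} {r : ℝ≥0∞}
    (hf : HasFPowerSeriesOnBall f p 0 r) {t : 𝕜} (ht : t ∈ Metric.eball 0 r) :
    HasSum (fun n => ((n + 1) * (n + c) * p.coeff (n + 1) - (n + a) * (n + b) * p.coeff n) * t ^ n)
      (hypergeometricOp a b c f t) := by
  have hf' := hf.hasFPowerSeriesOnBall_deriv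
  have h₀ := hf.hasSum_coeff_mul_pow ht
  have h₁ := hf'.hasSum_coeff_mul_pow ht
  have h₂ := hf'.hasFPowerSeriesOnBall_deriv.hasSum_coeff_mul_pow ht
  simp only [coeff_derivScalarSeries, zero_add, Nat.cast_add, Nat.cast_one] at h₀ h₁ h₂
  exact hasSum_hypergeometric_recurrence a b c h₀ h₁ h₂

variable {a b c : 𝕜}

theorem analyticAt_ordinaryHypergeometric {t : 𝕜}
    (ht : ‖t‖ₑ < (ordinaryHypergeometricSeries 𝕜 a b c).radius) :
    AnalyticAt 𝕜 (₂F₁ a b c) t :=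
  ((ordinaryHypergeometricSeries 𝕜 a b c).hasFPowerSeriesOnBall (pos_of_gt ht)).analyticAt_of_mem
    (by simpa using ht)

variable [CharZero 𝕜]

theorem hypergeometricOp_ordinaryHypergeometric (hc : ∀ n : ℕ, (n : 𝕜) + c ≠ 0) {t : 𝕜}
    (ht : ‖t‖ₑ < (ordinaryHypergeometricSeries 𝕜 a b c).radius) :
    hypergeometricOp a b c (₂F₁ a b c) t = 0 := by
  set p := ordinaryHypergeometricSeries 𝕜 a b c
  have hp : HasFPowerSeriesOnBall (₂F₁ a b c) p 0 p.radius :=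
    p.hasFPowerSeriesOnBall (pos_of_gt ht)
  refine (hp.hasSum_hypergeometricOp a b c (by simpa using ht)).unique ?_
  convert hasSum_zero with n
  simp [p, ordinaryHypergeometricSeries, coeff_ofScalars,
    ordinaryHypergeometricCoefficient_succ a b c (hc n)]

theorem eventuallyEq_ordinaryHypergeometric_of_hypergeometricOp (hc : ∀ n : ℕ, (n : 𝕜) + c ≠ 0)
    {f : 𝕜 → 𝕜} (hf : AnalyticAt 𝕜 f 0) (hf₀ : f 0 = 1)
    (hode : ∀ᶠ t in 𝓝 0, hypergeometricOp a b c f t = 0) : f =ᶠ[𝓝 0] ₂F₁ a b c := by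
  obtain ⟨p, r, hp⟩ := hf
  obtain ⟨ε, hε, hεode⟩ := EMetric.mem_nhds_iff.mp hode
  replace hp := hp.mono (lt_min hp.r_pos hε) (min_le_left r ε)
  have hrec := eq_zero_of_forall_hasSum_mul_pow_zero
    (d := fun n => (n + 1) * (n + c) * p.coeff (n + 1) - (n + a) * (n + b) * p.coeff n)
    hp.r_pos fun t ht => by
      have h0 : hypergeometricOp a b c f t = 0 :=
        hεode (Metric.eball_subset_eball (min_le_right r ε) ht)
      simpa [h0] using hp.hasSum_hypergeometricOp a b c ht
  have hcoeff : ∀ n, p.coeff n = ordinaryHypergeometricCoefficient a b c n := by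
    intro n
    induction n with
    | zero =>
      simpa [hf₀, ordinaryHypergeometricCoefficient] using
        hp.hasFPowerSeriesAt.coeff_zero (fun _ => 0)
    | succ n ih =>
      refine mul_left_cancel₀ (mul_ne_zero n.cast_add_one_ne_zero (hc n)) ?_
      rw [ordinaryHypergeometricCoefficient_succ a b c (hc n), ← ih]
      simpa [sub_eq_zero] using congr_fun hrec n
  filter_upwards [Metric.eball_mem_nhds (0 : 𝕜) hp.r_pos] with t ht
  rw [ordinaryHypergeometric, ordinaryHypergeometric_sum_eq]
  simpa [hcoeff, smul_eq_mul, mul_comm] using (hp.hasSum_coeff_mul_pow ht).tsum_eq.symm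

end Hypergeometric

theorem enorm_lt_radius_ordinaryHypergeometricSeries {a b c : ℝ} (ha : 0 < a) (hb : 0 < b)
    (hc : 0 < c) {t : ℝ} (ht : |t| < 1) : ‖t‖ₑ < (ordinaryHypergeometricSeries ℝ a b c).radius := by
  rw [ordinaryHypergeometricSeries_radius_eq_one ℝ a b c fun n => by
    have : (0 : ℝ) ≤ n := n.cast_nonneg
    refine ⟨?_, ?_, ?_⟩ <;> linarith]
  simpa [Real.enorm_eq_ofReal_abs] using ht

theorem realHyp2F1_eq_ordinaryHypergeometric (a b c t : ℝ) :
    realHyp2F1 a b c t = ₂F₁ a b c t := by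
  rw [ordinaryHypergeometric, ordinaryHypergeometric_sum_eq, realHyp2F1]
  congr 1 with n
  simp only [div_eq_mul_inv, mul_inv, smul_eq_mul]
  ring

section SecondDerivative

variable {𝕜 : Type*} [NontriviallyNormedField 𝕜] {G φ F : 𝕜 → 𝕜} {x : 𝕜}

theorem deriv_mul_comp (hG : DifferentiableAt 𝕜 G x) (hφ : DifferentiableAt 𝕜 φ x)
    (hF : DifferentiableAt 𝕜 F (φ x)) :
    deriv (fun y => G y * F (φ y)) x = deriv G x * F (φ x) + G x * (deriv F (φ x) * deriv φ x) :=
  (hG.hasDerivAt.mul (hF.hasDerivAt.comp x hφ.hasDerivAt)).deriv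

theorem deriv_deriv_mul_comp [CompleteSpace 𝕜] (hG : AnalyticAt 𝕜 G x) (hφ : AnalyticAt 𝕜 φ x)
    (hF : AnalyticAt 𝕜 F (φ x)) :
    deriv (deriv fun y => G y * F (φ y)) x =
      deriv (deriv G) x * F (φ x) + 2 * deriv G x * (deriv F (φ x) * deriv φ x) +
        G x * (deriv (deriv F) (φ x) * deriv φ x ^ 2 + deriv F (φ x) * deriv (deriv φ) x) := by
  have hfirst : deriv (fun y => G y * F (φ y)) =ᶠ[𝓝 x]
      fun y => deriv G y * F (φ y) + G y * (deriv F (φ y) * deriv φ y) := by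
    filter_upwards [hG.eventually_analyticAt, hφ.eventually_analyticAt,
      hφ.continuousAt.eventually hF.eventually_analyticAt] with y hGy hφy hFy
    exact deriv_mul_comp hGy.differentiableAt hφy.differentiableAt hFy.differentiableAt
  have hG' := hG.differentiableAt.hasDerivAt
  have hφ' := hφ.differentiableAt.hasDerivAt
  have hFφ := hF.differentiableAt.hasDerivAt.comp x hφ'
  have hF'φ := hF.deriv.differentiableAt.hasDerivAt.comp x hφ'
  refine hfirst.deriv_eq.trans ((((hG.deriv.differentiableAt.hasDerivAt.mul hFφ).add
    (hG'.mul (hF'φ.mul hφ.deriv.differentiableAt.hasDerivAt))).deriv).trans ?_)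
  simp only [Function.comp_apply, Pi.mul_apply]
  ring

end SecondDerivative

theorem AnalyticAt.rpow_const {f : ℝ → ℝ} {x : ℝ} (hf : AnalyticAt ℝ f x) (hx : 0 < f x)
    (s : ℝ) : AnalyticAt ℝ (fun y => f y ^ s) x := by
  refine ((hf.log hx).mul (analyticAt_const (v := s))).rexp'.congr ?_
  filter_upwards [hf.continuousAt.eventually (lt_mem_nhds hx)] with y hy
  simp [Real.rpow_def_of_pos hy]

section Goursat

noncomputable def goursatMap (x : ℝ) : ℝ := 27 * x * (1 - x) ^ 2 / (1 + 3 * x) ^ 3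

variable {x : ℝ}

theorem abs_goursatMap_lt_one (hx₀ : -1 / 100 < x) (hx₁ : x < 1 / 9) : |goursatMap x| < 1 := by
  have hs : 0 < (1 + 3 * x) ^ 3 := pow_pos (by linarith) 3
  rw [goursatMap, abs_lt, lt_div_iff₀ hs, div_lt_iff₀ hs]
  constructor <;>
    nlinarith [sq_nonneg x, sq_nonneg (1 - x), sq_nonneg (1 + 3 * x), sq_nonneg (1 - 9 * x)]

theorem analyticAt_goursatMap (hx : 1 + 3 * x ≠ 0) : AnalyticAt ℝ goursatMap x := by
  unfold goursatMap
  fun_prop (disch := exact pow_ne_zero _ hx)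

theorem hasDerivAt_one_add_three_mul (x : ℝ) : HasDerivAt (fun y : ℝ => 1 + 3 * y) 3 x := by
  simpa using ((hasDerivAt_id' x).const_mul 3).const_add 1

theorem hasDerivAt_goursatMap (hx : 1 + 3 * x ≠ 0) :
    HasDerivAt goursatMap (27 * (1 - x) * (1 - 9 * x) / (1 + 3 * x) ^ 4) x := by
  have h := (((hasDerivAt_id' x).const_mul 27).mul
    (((hasDerivAt_id' x).const_sub 1).pow 2)).div ((hasDerivAt_one_add_three_mul x).pow 3)
    (pow_ne_zero 3 hx)
  refine h.congr_deriv ?_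
  norm_num [Pi.mul_apply, Pi.pow_apply]
  field_simp
  ring

theorem deriv_deriv_goursatMap (hx : 1 + 3 * x ≠ 0) :
    deriv (deriv goursatMap) x =
      27 * ((18 * x - 10) * (1 + 3 * x) - 12 * (1 - x) * (1 - 9 * x)) / (1 + 3 * x) ^ 5 := by
  have hderiv : deriv goursatMap =ᶠ[𝓝 x]
      fun y => 27 * (1 - y) * (1 - 9 * y) / (1 + 3 * y) ^ 4 := by
    filter_upwards [(hasDerivAt_one_add_three_mul x).continuousAt.eventually_ne hx] with y hy
    exact (hasDerivAt_goursatMap hy).deriv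
  have h := ((((hasDerivAt_id' x).const_sub 1).const_mul 27).mul
    (((hasDerivAt_id' x).const_mul 9).const_sub 1)).div ((hasDerivAt_one_add_three_mul x).pow 4)
    (pow_ne_zero 4 hx)
  refine hderiv.deriv_eq.trans (h.deriv.trans ?_)
  norm_num [Pi.mul_apply, Pi.pow_apply]
  field_simp
  ring

theorem analyticAt_one_add_three_mul_rpow (hx : 0 < 1 + 3 * x) (s : ℝ) :
    AnalyticAt ℝ (fun y => (1 + 3 * y) ^ s) x :=
  AnalyticAt.rpow_const (f := fun y => 1 + 3 * y) (by fun_prop) hx s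

theorem hasDerivAt_one_add_three_mul_rpow (hx : 0 < 1 + 3 * x) (s : ℝ) :
    HasDerivAt (fun y => (1 + 3 * y) ^ s) (3 * s * (1 + 3 * x) ^ s / (1 + 3 * x)) x := by
  refine ((hasDerivAt_one_add_three_mul x).rpow_const (Or.inl hx.ne')).congr_deriv ?_
  rw [Real.rpow_sub_one hx.ne']
  ring

theorem deriv_deriv_one_add_three_mul_rpow (hx : 0 < 1 + 3 * x) (s : ℝ) :
    deriv (deriv fun y => (1 + 3 * y) ^ s) x =
      9 * s * (s - 1) * (1 + 3 * x) ^ s / (1 + 3 * x) ^ 2 := by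
  have hderiv : (deriv fun y => (1 + 3 * y) ^ s) =ᶠ[𝓝 x]
      fun y => 3 * s * (1 + 3 * y) ^ s / (1 + 3 * y) := by
    filter_upwards [(hasDerivAt_one_add_three_mul x).continuousAt.eventually (lt_mem_nhds hx)]
      with y hy
    exact (hasDerivAt_one_add_three_mul_rpow hy s).deriv
  have h := ((hasDerivAt_one_add_three_mul_rpow hx s).const_mul (3 * s)).div
    (hasDerivAt_one_add_three_mul x) hx.ne'
  refine hderiv.deriv_eq.trans (h.deriv.trans ?_)
  field_simp
  ring

theorem hypergeometricOp_goursat (hx : 0 < 1 + 3 * x) (a : ℝ) {F : ℝ → ℝ}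
    (hF : AnalyticAt ℝ F (goursatMap x)) :
    hypergeometricOp (3 * a) (3 * a + 1 / 2) (2 * a + 5 / 6)
        (fun y => (1 + 3 * y) ^ (-3 * a) * F (goursatMap y)) x =
      27 * (1 - x) / (1 + 3 * x) ^ 2 * (1 + 3 * x) ^ (-3 * a) *
        hypergeometricOp a (a + 1 / 3) (2 * a + 5 / 6) F (goursatMap x) := by
  have hG := analyticAt_one_add_three_mul_rpow hx (-3 * a)
  have hφ := analyticAt_goursatMap hx.ne'
  simp only [hypergeometricOp]
  rw [deriv_deriv_mul_comp hG hφ hF,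
    deriv_mul_comp hG.differentiableAt hφ.differentiableAt hF.differentiableAt,
    deriv_deriv_one_add_three_mul_rpow hx, (hasDerivAt_one_add_three_mul_rpow hx _).deriv,
    deriv_deriv_goursatMap hx.ne', (hasDerivAt_goursatMap hx.ne').deriv]
  generalize F (goursatMap x) = F₀, deriv F (goursatMap x) = F₁,
    deriv (deriv F) (goursatMap x) = F₂, (1 + 3 * x) ^ (-3 * a) = P
  rw [goursatMap]
  -- `field_simp` normalizes `1 + 3 * x` to `1 + x * 3` and looks for this form
  have hs : 1 + x * 3 ≠ 0 := by rw [mul_comm]; exact hx.ne'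
  field_simp
  ring

end Goursat

theorem goursat_ordinaryHypergeometric {a : ℝ} (ha : 0 < a) {x : ℝ}
    (hx : x ∈ Set.Ioo (-1 / 100 : ℝ) (1 / 9)) :
    (1 + 3 * x) ^ (-3 * a) * ₂F₁ a (a + 1 / 3) (2 * a + 5 / 6) (goursatMap x) =
      ₂F₁ (3 * a) (3 * a + 1 / 2) (2 * a + 5 / 6) x := by
  set U := Set.Ioo (-1 / 100 : ℝ) (1 / 9)
  have hc : ∀ n : ℕ, (n : ℝ) + (2 * a + 5 / 6) ≠ 0 := fun n => by positivity
  have hs : ∀ y ∈ U, 0 < 1 + 3 * y := fun y hy => by linarith [hy.1]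
  have hF : ∀ y ∈ U, ‖goursatMap y‖ₑ <
      (ordinaryHypergeometricSeries ℝ a (a + 1 / 3) (2 * a + 5 / 6)).radius := fun y hy =>
    enorm_lt_radius_ordinaryHypergeometricSeries ha (by positivity) (by positivity)
      (abs_goursatMap_lt_one hy.1 hy.2)
  have hw : AnalyticOnNhd ℝ
      (fun y => (1 + 3 * y) ^ (-3 * a) * ₂F₁ a (a + 1 / 3) (2 * a + 5 / 6) (goursatMap y)) U :=
    fun y hy => (analyticAt_one_add_three_mul_rpow (hs y hy) _).mul
      ((analyticAt_ordinaryHypergeometric (hF y hy)).comp (analyticAt_goursatMap (hs y hy).ne'))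
  have hH : AnalyticOnNhd ℝ (₂F₁ (3 * a) (3 * a + 1 / 2) (2 * a + 5 / 6)) U := fun y hy =>
    analyticAt_ordinaryHypergeometric <| enorm_lt_radius_ordinaryHypergeometricSeries
      (by positivity) (by positivity) (by positivity)
      (abs_lt.mpr ⟨by linarith [hy.1], by linarith [hy.2]⟩)
  have h0 : (0 : ℝ) ∈ U := by norm_num [U]
  refine hw.eqOn_of_preconnected_of_eventuallyEq hH isPreconnected_Ioo h0 ?_ hx
  refine eventuallyEq_ordinaryHypergeometric_of_hypergeometricOp hc (hw 0 h0)
    (by simp [goursatMap]) ?_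
  filter_upwards [isOpen_Ioo.mem_nhds h0] with y hy
  rw [hypergeometricOp_goursat (hs y hy) a (analyticAt_ordinaryHypergeometric (hF y hy)),
    hypergeometricOp_ordinaryHypergeometric hc (hF y hy), mul_zero]

/-- Goursat's cubic transformation (entry (116) of Goursat; Section 11, Example 2). -/
theorem goursat_cubic (a : ℝ) (ha : 0 < a) (x : ℝ) (hx0 : 0 < x) (hx1 : x < 1/9) :
    realHyp2F1 a (a + 1/3) (2 * a + 5/6) (27 * x * (1 - x) ^ 2 / (1 + 3 * x) ^ 3)
      = (1 + 3 * x) ^ (3 * a) * realHyp2F1 (3 * a) (3 * a + 1/2) (2 * a + 5/6) x := by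
  have hs : 0 < 1 + 3 * x := by linarith
  rw [realHyp2F1_eq_ordinaryHypergeometric, realHyp2F1_eq_ordinaryHypergeometric,
    ← goursat_ordinaryHypergeometric ha ⟨by linarith, hx1⟩, ← mul_assoc, ← Real.rpow_add hs]
  simp [goursatMap]
end

section
/- For real k with 0 < k < 1, define F(k) := ∫₀¹ ((1−z²)(1−k²z²))^{−1/2} dz (a convergent improper integral). Then F(2√k/(1+k)) = (1+k) · F(k). (Note that 0 < 2√k/(1+k) < 1 since (1+k)² − 4k = (1−k)² > 0.) -/
/-!
Landen's substitution `z = (1 + k) t / (1 + k t²)` maps `(0, 1)` bijectively onto itself, and with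
`k₁ = 2√k / (1 + k)` it factors both quadratics of the integrand:
`1 - z² = (1 - t²)(1 - k²t²) / (1 + k t²)²` and `1 - k₁² z² = ((1 - k t²) / (1 + k t²))²`.
Since `dz/dt = (1 + k)(1 - k t²) / (1 + k t²)²`, the factor `1 - k t²` cancels and
`dz / √((1 - z²)(1 - k₁² z²)) = (1 + k) dt / √((1 - t²)(1 - k² t²))`.
-/

open Real Set MeasureTheory

/-- The complete elliptic integral of the first kind
F(k) = ∫₀¹ dz/√((1−z²)(1−k²z²)). -/
noncomputable def ellipticF (k : ℝ) : ℝ :=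
  ∫ z in Set.Ioo (0 : ℝ) 1, 1 / Real.sqrt ((1 - z ^ 2) * (1 - k ^ 2 * z ^ 2))

noncomputable def ellipticIntegrand (k z : ℝ) : ℝ :=
  1 / √((1 - z ^ 2) * (1 - k ^ 2 * z ^ 2))

lemma ellipticF_eq_setIntegral (k : ℝ) :
    ellipticF k = ∫ z in Ioo 0 1, ellipticIntegrand k z :=
  rfl

noncomputable def landenMap (k t : ℝ) : ℝ :=
  (1 + k) * t / (1 + k * t ^ 2)

namespace landenMap

variable {k : ℝ}

lemma hasDerivAt (hk : 0 ≤ k) (t : ℝ) :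
    HasDerivAt (landenMap k) ((1 + k) * (1 - k * t ^ 2) / (1 + k * t ^ 2) ^ 2) t := by
  have hD : 1 + k * t ^ 2 ≠ 0 := by positivity
  have hnum : HasDerivAt (fun t : ℝ => (1 + k) * t) (1 + k) t := by
    simpa using (hasDerivAt_id t).const_mul (1 + k)
  have hden : HasDerivAt (fun t : ℝ => 1 + k * t ^ 2) (k * (2 * t)) t := by
    simpa using ((hasDerivAt_pow 2 t).const_mul k).const_add 1
  refine (hnum.div hden hD).congr_deriv ?_
  field_simp
  ring

lemma injOn (hk0 : 0 ≤ k) (hk1 : k ≤ 1) : InjOn (landenMap k) (Ioo 0 1) := by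
  intro a ⟨ha0, ha1⟩ b ⟨hb0, hb1⟩ hab
  have hDa : 1 + k * a ^ 2 ≠ 0 := by positivity
  have hDb : 1 + k * b ^ 2 ≠ 0 := by positivity
  have hcross : (a - b) * (1 - k * a * b) = 0 := by
    unfold landenMap at hab
    field_simp at hab
    linear_combination hab
  have hkab : k * a * b < 1 := by nlinarith [mul_pos ha0 hb0, mul_lt_mul'' ha1 hb1 ha0.le hb0.le]
  have hfactor : 1 - k * a * b ≠ 0 := by linarith
  exact sub_eq_zero.mp ((mul_eq_zero.mp hcross).resolve_right hfactor)

lemma mapsTo (hk0 : 0 ≤ k) (hk1 : k ≤ 1) : MapsTo (landenMap k) (Ioo 0 1) (Ioo 0 1) := by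
  intro t ⟨ht0, ht1⟩
  have hD : 0 < 1 + k * t ^ 2 := by positivity
  refine ⟨by unfold landenMap; positivity, (div_lt_one hD).mpr ?_⟩
  -- `1 + k t² - (1 + k) t = (1 - t)(1 - k t)`
  have hkt : k * t < 1 := by nlinarith
  nlinarith [mul_pos (sub_pos.mpr ht1) (sub_pos.mpr hkt)]

lemma image_Ioo (hk0 : 0 ≤ k) (hk1 : k ≤ 1) : landenMap k '' Ioo 0 1 = Ioo 0 1 := by
  refine (mapsTo hk0 hk1).image_subset.antisymm ?_
  have hcont : ContinuousOn (landenMap k) (Icc 0 1) :=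
    fun t _ => (hasDerivAt hk0 t).continuousAt.continuousWithinAt
  have hval0 : landenMap k 0 = 0 := by simp [landenMap]
  have hval1 : landenMap k 1 = 1 := by
    have : 1 + k ≠ 0 := by positivity
    simp [landenMap, this]
  simpa [hval0, hval1] using intermediate_value_Ioo zero_le_one hcont

lemma one_sub_sq (hk : 0 ≤ k) (t : ℝ) :
    1 - landenMap k t ^ 2 = (1 - t ^ 2) * (1 - k ^ 2 * t ^ 2) / (1 + k * t ^ 2) ^ 2 := by
  have hD : 1 + k * t ^ 2 ≠ 0 := by positivity
  unfold landenMap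
  field_simp
  ring

lemma one_sub_modulus_sq_mul_sq (hk : 0 ≤ k) (t : ℝ) :
    1 - (2 * √k / (1 + k)) ^ 2 * landenMap k t ^ 2 = ((1 - k * t ^ 2) / (1 + k * t ^ 2)) ^ 2 := by
  have hD : 1 + k * t ^ 2 ≠ 0 := by positivity
  have hk_ne : 1 + k ≠ 0 := by positivity
  unfold landenMap
  rw [div_pow, mul_pow, sq_sqrt hk]
  field_simp
  ring

lemma abs_deriv_mul_ellipticIntegrand (hk : 0 ≤ k) {t : ℝ} (ht : k * t ^ 2 ≠ 1) :
    |(1 + k) * (1 - k * t ^ 2) / (1 + k * t ^ 2) ^ 2| *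
        ellipticIntegrand (2 * √k / (1 + k)) (landenMap k t) =
      (1 + k) * ellipticIntegrand k t := by
  have hD : 0 < 1 + k * t ^ 2 := by positivity
  have hC : |1 - k * t ^ 2| ≠ 0 := abs_ne_zero.mpr (sub_ne_zero.mpr (Ne.symm ht))
  have hsqrt : √((1 - landenMap k t ^ 2) * (1 - (2 * √k / (1 + k)) ^ 2 * landenMap k t ^ 2)) =
      √((1 - t ^ 2) * (1 - k ^ 2 * t ^ 2)) * |(1 - k * t ^ 2) / (1 + k * t ^ 2) ^ 2| := by
    rw [one_sub_sq hk, one_sub_modulus_sq_mul_sq hk, ← sqrt_sq_eq_abs, ← sqrt_mul' _ (sq_nonneg _)]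
    congr 1
    field_simp
  rw [ellipticIntegrand, ellipticIntegrand, hsqrt, abs_div, abs_div, abs_mul,
    abs_of_pos (by positivity : 0 < 1 + k), abs_of_pos (by positivity : 0 < (1 + k * t ^ 2) ^ 2)]
  field_simp

end landenMap

/-- Gauss's AGM transformation of the complete elliptic integral of the first kind
(Section 12 of the paper). -/
theorem gauss_AGM_transformation (k : ℝ) (hk0 : 0 < k) (hk1 : k < 1) :
    ellipticF (2 * Real.sqrt k / (1 + k)) = (1 + k) * ellipticF k := by
  have hchange := integral_image_eq_integral_abs_deriv_smul measurableSet_Ioo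
    (fun t _ => (landenMap.hasDerivAt hk0.le t).hasDerivWithinAt)
    (landenMap.injOn hk0.le hk1.le) (ellipticIntegrand (2 * √k / (1 + k)))
  rw [landenMap.image_Ioo hk0.le hk1.le] at hchange
  rw [ellipticF_eq_setIntegral, hchange, ellipticF_eq_setIntegral, ← integral_const_mul]
  refine setIntegral_congr_fun measurableSet_Ioo fun t ⟨ht0, ht1⟩ => ?_
  exact landenMap.abs_deriv_mul_ellipticIntegrand hk0.le (by nlinarith)
end
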